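/- arXiv:2507.04516 — 2 statements merged into one kernel-verified Lean document; each statement's English description precedes it below -/
import Mathlib

section
/- (Vizing Adjacency Lemma.) Let D be a positive integer and let G be a simple graph with Δ(G) ≤ D. Let e = xy be an edge such that x has at most D − d(y) + [d(y)=D] neighbors of degree D (where [P] is 1 if P holds and 0 otherwise). Then any partial D-edge-coloring of G in which e is uncolored can be extended to a partial D-edge-coloring whose set of colored edges is the original colored set together with e. -/
/-!
Suppose the coloring cannot be extended to `xy`. Call `v` a fan vertex if there is a Vizing fan
`y = v₀, v₁, …, vₖ = v` of distinct neighbours of `x`, the color of each `x vᵢ₊₁` being free at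
`vᵢ`. Rotating a fan shows that no color free at a fan vertex is free at `x`, and a Kempe change
on an `(a,b)`-chain, with `a` free at `x`, shows that two fan vertices have no common free color.
So every color free at a fan vertex is used at `x` on the edge to a fan vertex other than `y`,
and the numbers of free colors at the fan vertices add up to at most the number of fan vertices
other than `y`. Since `y` has at least `D + 1 - d(y)` free colors and a fan vertex of degree
below `D` at least one, more than `D - d(y)` fan vertices other than `y` have degree `D`; they are
neighbours of `x`, which contradicts the hypothesis.
-/

open SimpleGraph

open scoped Classical in
/-- `π` is a proper partial `D`-edge-coloring of `G`: it assigns `none` outside the edge set,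
and distinct incident edges receive different colors. -/
def IsProperPEC {V : Type} (G : SimpleGraph V) (D : ℕ) (π : Sym2 V → Option (Fin D)) : Prop :=
  (∀ e, π e ≠ none → e ∈ G.edgeSet) ∧
    ∀ e₁ e₂ : Sym2 V, e₁ ≠ e₂ → (∃ v, v ∈ e₁ ∧ v ∈ e₂) → π e₁ ≠ none → π e₁ ≠ π e₂

/-- Number of neighbors of `x` having degree `8`. -/
def deg8Nbrs {V : Type} [Fintype V] [DecidableEq V] (G : SimpleGraph V) [DecidableRel G.Adj]
    (x : V) : ℕ :=
  ((G.neighborFinset x).filter (fun w => G.degree w = 8)).card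

/-- The edge `xy` is `x`-weak. -/
def IsXWeak {V : Type} [Fintype V] [DecidableEq V] (G : SimpleGraph V) [DecidableRel G.Adj]
    (x y : V) : Prop :=
  deg8Nbrs G x ≤ 8 - G.degree y + (if G.degree y = 8 then 1 else 0)

/-- The edge `e` is weak: `e = xy` with `xy` `x`-weak or `y`-weak. -/
def IsWeakEdge {V : Type} [Fintype V] [DecidableEq V] (G : SimpleGraph V) [DecidableRel G.Adj]
    (e : Sym2 V) : Prop :=
  ∃ x y : V, e = s(x, y) ∧ G.Adj x y ∧ (IsXWeak G x y ∨ IsXWeak G y x)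

/-- A butterfly of the first kind with the given vertices. -/
def IsButterflyB1 {V : Type} [Fintype V] [DecidableEq V] (G : SimpleGraph V) [DecidableRel G.Adj]
    (x y z v₁ v₂ v₃ : V) : Prop :=
  List.Pairwise (· ≠ ·) [x, y, z, v₁, v₂, v₃] ∧
  G.Adj x y ∧ G.Adj x z ∧ G.Adj y v₁ ∧ G.Adj y v₃ ∧ G.Adj z v₁ ∧ G.Adj z v₂ ∧
  G.Adj x v₁ ∧ G.Adj x v₂ ∧ G.Adj x v₃ ∧
  G.degree y = 3 ∧ G.degree z = 3 ∧ G.degree x = 8 ∧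
  G.degree v₁ = 8 ∧ G.degree v₂ = 8 ∧ G.degree v₃ = 8

/-- A butterfly of the second kind with the given vertices. -/
def IsButterflyB2 {V : Type} [Fintype V] [DecidableEq V] (G : SimpleGraph V) [DecidableRel G.Adj]
    (x y z v₁ v₂ v₃ v₄ : V) : Prop :=
  List.Pairwise (· ≠ ·) [x, y, z, v₁, v₂, v₃, v₄] ∧
  G.Adj x y ∧ G.Adj x z ∧ G.Adj y v₁ ∧ G.Adj y v₄ ∧ G.Adj z v₂ ∧ G.Adj z v₃ ∧
  G.Adj x v₁ ∧ G.Adj x v₂ ∧ G.Adj x v₃ ∧ G.Adj x v₄ ∧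
  G.degree y = 3 ∧ G.degree z = 3 ∧ G.degree x = 8 ∧
  G.degree v₁ = 8 ∧ G.degree v₂ = 8 ∧ G.degree v₃ = 8 ∧ G.degree v₄ = 8

/-- The pair `(x, y)` is the distinguished edge `xy` of some butterfly of `G`. -/
def IsButterflyLikeAt {V : Type} [Fintype V] [DecidableEq V] (G : SimpleGraph V)
    [DecidableRel G.Adj] (x y : V) : Prop :=
  (∃ z v₁ v₂ v₃, IsButterflyB1 G x y z v₁ v₂ v₃) ∨
  (∃ z v₁ v₂ v₃ v₄, IsButterflyB2 G x y z v₁ v₂ v₃ v₄)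

/-- The edge `e` is butterfly-like. -/
def IsButterflyLike {V : Type} [Fintype V] [DecidableEq V] (G : SimpleGraph V)
    [DecidableRel G.Adj] (e : Sym2 V) : Prop :=
  ∃ x y : V, e = s(x, y) ∧ IsButterflyLikeAt G x y

/-- An edge is reducible when it is weak or butterfly-like. -/
def IsReducible {V : Type} [Fintype V] [DecidableEq V] (G : SimpleGraph V) [DecidableRel G.Adj]
    (e : Sym2 V) : Prop :=
  IsWeakEdge G e ∨ IsButterflyLike G e

/-- Reversal of darts, as a permutation. -/
def dartRev {V : Type} (G : SimpleGraph V) : Equiv.Perm G.Dart :=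
  ⟨SimpleGraph.Dart.symm, SimpleGraph.Dart.symm,
    fun d => SimpleGraph.Dart.symm_symm d, fun d => SimpleGraph.Dart.symm_symm d⟩

/-- `ρ` is a rotation system of `G`: it permutes the darts around each vertex
in a single cycle. -/
def IsRotationSystem {V : Type} (G : SimpleGraph V) (ρ : Equiv.Perm G.Dart) : Prop :=
  (∀ d : G.Dart, (ρ d).fst = d.fst) ∧
    ∀ d d' : G.Dart, d.fst = d'.fst → ρ.SameCycle d d'

/-- The face permutation of a rotation system. -/
def facePerm {V : Type} (G : SimpleGraph V) (ρ : Equiv.Perm G.Dart) : Equiv.Perm G.Dart :=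
  (dartRev G).trans ρ

/-- The setoid of darts whose classes are the faces of a combinatorial embedding. -/
def faceSetoid {V : Type} (G : SimpleGraph V) (ρ : Equiv.Perm G.Dart) : Setoid G.Dart :=
  ⟨(facePerm G ρ).SameCycle, Equiv.Perm.SameCycle.equivalence _⟩

/-- The number of faces of a combinatorial embedding. -/
noncomputable def numFaces {V : Type} (G : SimpleGraph V) (ρ : Equiv.Perm G.Dart) : ℕ :=
  Nat.card (Quotient (faceSetoid G ρ))

/-- The number of isolated vertices of `G`. -/
noncomputable def numIsolated {V : Type} (G : SimpleGraph V) : ℕ :=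
  Nat.card {v : V // ∀ w, ¬ G.Adj v w}

/-- The number of connected components of `G`. -/
noncomputable def numComponents {V : Type} (G : SimpleGraph V) : ℕ :=
  Nat.card G.ConnectedComponent

/-- `G` is embeddable in an orientable surface of genus at most `g`: it has a combinatorial
embedding (rotation system) whose Euler characteristic, summed over components, is at least
`2 * (number of components) - 2 * g`. -/
def GenusLE {V : Type} (G : SimpleGraph V) (g : ℕ) : Prop :=
  ∃ ρ : Equiv.Perm G.Dart, IsRotationSystem G ρ ∧
    2 * (numComponents G : ℤ) - 2 * (g : ℤ) ≤
      (Nat.card V : ℤ) - (Nat.card G.edgeSet : ℤ) + ((numFaces G ρ + numIsolated G : ℕ) : ℤ)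

/-- `G` is planar: it is embeddable in an orientable surface of genus `0`, i.e. the sphere. -/
def IsPlanar {V : Type} (G : SimpleGraph V) : Prop := GenusLE G 0

/-- Color `c` is free at `v` (no colored edge incident to `v` has color `c`). -/
def freeAt {V : Type} {D : ℕ} (π : Sym2 V → Option (Fin D)) (v : V) (c : Fin D) : Prop :=
  ∀ e : Sym2 V, v ∈ e → π e ≠ some c

/-- The graph formed by the edges colored `a` or `b`; its components are the `(a,b)`-chains. -/
def chainGraph {V : Type} {D : ℕ} (π : Sym2 V → Option (Fin D)) (a b : Fin D) : SimpleGraph V :=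
  SimpleGraph.fromEdgeSet {e | π e = some a ∨ π e = some b}

/-- `u` and `v` lie on the same `(a,b)`-chain. -/
def chainReach {V : Type} {D : ℕ} (π : Sym2 V → Option (Fin D)) (a b : Fin D) (u v : V) : Prop :=
  (chainGraph π a b).Reachable u v

/-- `v` is an endpoint of its `(a,b)`-chain (it has at most one neighbor on the chain). -/
def chainEndpoint {V : Type} {D : ℕ} (π : Sym2 V → Option (Fin D)) (a b : Fin D) (v : V) : Prop :=
  ((chainGraph π a b).neighborSet v).Subsingleton

/-- There is an `(a,b)`-chain with endpoints `u` and `v`. -/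
def chainPathEndpoints {V : Type} {D : ℕ} (π : Sym2 V → Option (Fin D)) (a b : Fin D)
    (u v : V) : Prop :=
  u ≠ v ∧ chainReach π a b u v ∧ chainEndpoint π a b u ∧ chainEndpoint π a b v

/-- The `(a,b)`-chain containing `x` is a cycle (no vertex of it is an endpoint). -/
def inChainCycle {V : Type} {D : ℕ} (π : Sym2 V → Option (Fin D)) (a b : Fin D) (x : V) : Prop :=
  ∀ v, chainReach π a b x v → ¬ chainEndpoint π a b v

/-- The vertex `w` is at distance at most `k` from the edge `e`. -/
def vtxEdgeDistLE {V : Type} (G : SimpleGraph V) (k : ℕ) (w : V) (e : Sym2 V) : Prop :=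
  ∃ u, u ∈ e ∧ ∃ p : G.Walk w u, p.length ≤ k

/-- The edges `e₁` and `e₂` are at distance at most `k` from each other. -/
def edgeDistLE {V : Type} (G : SimpleGraph V) (k : ℕ) (e₁ e₂ : Sym2 V) : Prop :=
  ∃ u, u ∈ e₁ ∧ vtxEdgeDistLE G k u e₂

/-- The uncolored edge `xy` has type 0: `π` can be turned into a coloring additionally coloring
`xy` by recoloring only edges at distance at most 1 from `xy`. -/
def HasType0 {V : Type} (G : SimpleGraph V) (π : Sym2 V → Option (Fin 8)) (x y : V) : Prop :=
  ∃ σ : Sym2 V → Option (Fin 8), IsProperPEC G 8 σ ∧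
    (∀ e, σ e ≠ none ↔ (π e ≠ none ∨ e = s(x, y))) ∧
    (∀ e, ¬ edgeDistLE G 1 e s(x, y) → σ e = π e)

/-- The uncolored edge `xy` has type `1_{ab}`. -/
def HasType1 {V : Type} (π : Sym2 V → Option (Fin 8)) (x y : V) (a b : Fin 8) : Prop :=
  freeAt π x a ∧ freeAt π y b ∧ ¬ (chainReach π a b x y ∧ chainEndpoint π a b x)

/-- The uncolored edge `xy` has type `2_{ab}`. -/
def HasType2 {V : Type} (G : SimpleGraph V) (π : Sym2 V → Option (Fin 8)) (x y : V)
    (a b : Fin 8) : Prop :=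
  freeAt π y a ∧ freeAt π y b ∧
  ∃ c : Fin 8, c ≠ b ∧ freeAt π x c ∧
    ∃ z : V, G.Adj x z ∧ G.Adj y z ∧ π s(y, z) = some c ∧ π s(x, z) = some a ∧
      ¬ inChainCycle π a b x

/-- The uncolored edge `xy` has type `3_{ab}`. -/
def HasType3 {V : Type} (G : SimpleGraph V) (π : Sym2 V → Option (Fin 8)) (x y : V)
    (a b : Fin 8) : Prop :=
  freeAt π x a ∧ freeAt π y b ∧ chainPathEndpoints π a b x y ∧
  ∃ c : Fin 8, c ≠ b ∧ freeAt π y c ∧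
    ∃ z : V, G.Adj x z ∧ freeAt π z b ∧ π s(x, z) = some c

/-- The uncolored edge `xy` has type `4_{ab}`. -/
def HasType4 {V : Type} (G : SimpleGraph V) (π : Sym2 V → Option (Fin 8)) (x y : V)
    (a b : Fin 8) : Prop :=
  freeAt π y a ∧ freeAt π y b ∧ inChainCycle π a b x ∧
  ∃ c : Fin 8, freeAt π x c ∧
    ∃ z v : V, z ≠ v ∧ z ≠ x ∧ z ≠ y ∧ v ≠ x ∧ v ≠ y ∧
      G.Adj x v ∧ G.Adj z v ∧ π s(x, v) = some a ∧ π s(z, v) = some c ∧ freeAt π z b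

/-- The uncolored edge `xy` has type `5_{ab}`. -/
def HasType5 {V : Type} (G : SimpleGraph V) (π : Sym2 V → Option (Fin 8)) (x y : V)
    (a b : Fin 8) : Prop :=
  freeAt π y a ∧ freeAt π x b ∧ chainPathEndpoints π a b x y ∧
  ∃ c : Fin 8, c ≠ a ∧ freeAt π y c ∧
    ∃ z v : V, z ≠ v ∧ z ≠ x ∧ z ≠ y ∧ v ≠ x ∧ v ≠ y ∧
      G.Adj x v ∧ G.Adj z v ∧ π s(x, v) = some c ∧ π s(z, v) = some a ∧
      freeAt π z b ∧ freeAt π z c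

/-- The uncolored edge `xy` has type `6_{abcd}`. -/
def HasType6 {V : Type} (G : SimpleGraph V) (π : Sym2 V → Option (Fin 8)) (x y : V)
    (a b c d : Fin 8) : Prop :=
  freeAt π y a ∧ freeAt π y c ∧ freeAt π y d ∧ freeAt π x b ∧
  chainPathEndpoints π a b x y ∧ inChainCycle π c d x ∧
  ∃ z v₁ v₂ : V, z ≠ v₁ ∧ z ≠ v₂ ∧ v₁ ≠ v₂ ∧ z ≠ x ∧ z ≠ y ∧ v₁ ≠ x ∧ v₁ ≠ y ∧ v₂ ≠ x ∧ v₂ ≠ y ∧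
    G.Adj x v₁ ∧ G.Adj x v₂ ∧ G.Adj z v₁ ∧ G.Adj z v₂ ∧
    π s(x, v₁) = some c ∧ π s(x, v₂) = some a ∧ π s(z, v₁) = some a ∧ π s(z, v₂) = some c ∧
    freeAt π z b ∧ freeAt π z d


open Finset

namespace SimpleGraph

variable {V : Type*} {H : SimpleGraph V} {u v : V}

theorem Walk.IsPath.exists_adj_adj_of_mem_support {q : H.Walk u v} (hq : q.IsPath) {s : V}
    (hs : s ∈ q.support) (hsu : s ≠ u) (hsv : s ≠ v) :
    ∃ t₁ t₂, t₁ ≠ t₂ ∧ H.Adj s t₁ ∧ H.Adj s t₂ ∧ t₁ ∈ q.support ∧ t₂ ∈ q.support := by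
  obtain ⟨n, rfl, hn⟩ := Walk.mem_support_iff_exists_getVert.1 hs
  have h0 : n ≠ 0 := by rintro rfl; exact hsu q.getVert_zero
  have hl : n ≠ q.length := by rintro rfl; exact hsv q.getVert_length
  have hpred : H.Adj (q.getVert (n - 1)) (q.getVert n) := by
    simpa [Nat.sub_add_cancel (Nat.pos_of_ne_zero h0)] using
      q.adj_getVert_succ (i := n - 1) (by omega)
  refine ⟨q.getVert (n - 1), q.getVert (n + 1), fun h => ?_, hpred.symm,
    q.adj_getVert_succ (by omega), q.getVert_mem_support _, q.getVert_mem_support _⟩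
  have := hq.getVert_injOn (by simp; omega) (by simp; omega) h
  omega

theorem Walk.IsPath.mem_support_of_reachable {q : H.Walk u v} (hq : q.IsPath) (huv : u ≠ v)
    (hdeg : ∀ s t₁ t₂ t, H.Adj s t₁ → H.Adj s t₂ → H.Adj s t → t₁ ≠ t₂ → t = t₁ ∨ t = t₂)
    (hu : (H.neighborSet u).Subsingleton) (hv : (H.neighborSet v).Subsingleton) {w : V}
    (hw : H.Reachable u w) : w ∈ q.support := by
  have hnil : ¬ q.Nil := Walk.not_nil_of_ne huv
  have closed : ∀ s t, H.Adj s t → s ∈ q.support → t ∈ q.support := by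
    intro s t hst hs
    by_cases hsu : s = u
    · rw [hsu] at hst
      rw [hu hst (q.adj_snd hnil)]
      exact q.getVert_mem_support 1
    by_cases hsv : s = v
    · rw [hsv] at hst
      rw [hv hst (q.adj_penultimate hnil).symm]
      exact q.getVert_mem_support _
    obtain ⟨t₁, t₂, hne, h₁, h₂, ht₁, ht₂⟩ := hq.exists_adj_adj_of_mem_support hs hsu hsv
    rcases hdeg s t₁ t₂ t h₁ h₂ hst hne with rfl | rfl <;> assumption
  suffices ∀ a b (p : H.Walk a b), a ∈ q.support → b ∈ q.support from
    this u w hw.some q.start_mem_support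
  intro a b p
  induction p with
  | nil => exact id
  | cons h _ ih => exact fun ha => ih (closed _ _ h ha)

theorem not_reachable_and_reachable_of_subsingleton_neighborSet
    (hdeg : ∀ s t₁ t₂ t, H.Adj s t₁ → H.Adj s t₂ → H.Adj s t → t₁ ≠ t₂ → t = t₁ ∨ t = t₂)
    {w : V} (huv : u ≠ v) (hwu : w ≠ u) (hwv : w ≠ v) (hu : (H.neighborSet u).Subsingleton)
    (hv : (H.neighborSet v).Subsingleton) (hw : (H.neighborSet w).Subsingleton) :
    ¬ (H.Reachable u v ∧ H.Reachable u w) := by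
  classical
  rintro ⟨huv', huw⟩
  have hq := huv'.some.bypass_isPath
  obtain ⟨t₁, t₂, hne, h₁, h₂, -⟩ := hq.exists_adj_adj_of_mem_support
    (hq.mem_support_of_reachable huv hdeg hu hv huw) hwu hwv
  exact hne (hw h₁ h₂)

end SimpleGraph

variable {V : Type} {D : ℕ} {G : SimpleGraph V} {π : Sym2 V → Option (Fin D)}

section Coloring

def Extendable (G : SimpleGraph V) (π : Sym2 V → Option (Fin D)) (e₀ : Sym2 V) : Prop :=
  ∃ σ : Sym2 V → Option (Fin D), IsProperPEC G D σ ∧ ∀ e, (σ e ≠ none ↔ (π e ≠ none ∨ e = e₀))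

theorem extendable_congr {π' : Sym2 V → Option (Fin D)} {e₀ : Sym2 V}
    (h : ∀ e, π' e = none ↔ π e = none) : Extendable G π' e₀ ↔ Extendable G π e₀ := by
  simp only [Extendable, ne_eq, h]

theorem IsProperPEC.eq_of_mem_of_mem (hπ : IsProperPEC G D π) {e₁ e₂ : Sym2 V} {t : V}
    {c : Fin D} (ht₁ : t ∈ e₁) (ht₂ : t ∈ e₂) (h₁ : π e₁ = some c) (h₂ : π e₂ = some c) :
    e₁ = e₂ := by
  by_contra hne
  exact hπ.2 e₁ e₂ hne ⟨t, ht₁, ht₂⟩ (by simp [h₁]) (h₁.trans h₂.symm)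

theorem IsProperPEC.adj (hπ : IsProperPEC G D π) {u v : V} {c : Fin D}
    (h : π s(u, v) = some c) : G.Adj u v :=
  G.mem_edgeSet.1 (hπ.1 _ (by simp [h]))

theorem not_freeAt_iff {v : V} {c : Fin D} : ¬ freeAt π v c ↔ ∃ w, π s(v, w) = some c := by
  simp only [freeAt, not_forall, not_not, Sym2.mem_iff_exists]
  constructor
  · rintro ⟨e, ⟨w, rfl⟩, h⟩
    exact ⟨w, h⟩
  · rintro ⟨w, h⟩
    exact ⟨_, ⟨w, rfl⟩, h⟩

theorem freeAt_update_of_notMem [DecidableEq V] {e₀ : Sym2 V} {o : Option (Fin D)} {v : V}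
    {c : Fin D} (hv : v ∉ e₀) : freeAt (Function.update π e₀ o) v c ↔ freeAt π v c := by
  refine forall_congr' fun e => imp_congr_right fun he => ?_
  rw [Function.update_of_ne (by rintro rfl; exact hv he)]

theorem freeAt_update_of_eq_some [DecidableEq V] (hπ : IsProperPEC G D π) {x z : V}
    {c γ : Fin D} (hc : π s(x, z) = some c) (hγ : freeAt π x γ) :
    freeAt (Function.update π s(x, z) (some γ)) x c := by
  intro e he
  by_cases h : e = s(x, z)
  · subst h
    rw [Function.update_self]
    rintro ⟨⟩
    exact hγ _ (Sym2.mem_mk_left _ _) hc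
  · rw [Function.update_of_ne h]
    exact fun h' => h (hπ.eq_of_mem_of_mem he (Sym2.mem_mk_left _ _) h' hc)

theorem IsProperPEC.update [DecidableEq V] (hπ : IsProperPEC G D π) {u v : V} {γ : Fin D}
    (he : s(u, v) ∈ G.edgeSet) (hu : freeAt π u γ) (hv : freeAt π v γ) :
    IsProperPEC G D (Function.update π s(u, v) (some γ)) := by
  have hfree : ∀ t ∈ s(u, v), freeAt π t γ := by
    intro t ht
    rcases Sym2.mem_iff.1 ht with rfl | rfl
    exacts [hu, hv]
  refine ⟨fun e h => ?_, fun e₁ e₂ hne ⟨t, ht₁, ht₂⟩ h₁ => ?_⟩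
  · by_cases h' : e = s(u, v)
    · exact h' ▸ he
    · exact hπ.1 e (by rwa [Function.update_of_ne h'] at h)
  by_cases h₁' : e₁ = s(u, v)
  · subst h₁'
    rw [Function.update_self, Function.update_of_ne hne.symm]
    exact fun h => hfree t ht₁ e₂ ht₂ h.symm
  by_cases h₂' : e₂ = s(u, v)
  · subst h₂'
    rw [Function.update_self, Function.update_of_ne h₁']
    exact hfree t ht₂ e₁ ht₁
  rw [Function.update_of_ne h₁'] at h₁ ⊢
  rw [Function.update_of_ne h₂']
  exact hπ.2 e₁ e₂ hne ⟨t, ht₁, ht₂⟩ h₁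

theorem extendable_of_freeAt (hπ : IsProperPEC G D π) {x y : V} (hxy : G.Adj x y) {γ : Fin D}
    (hx : freeAt π x γ) (hy : freeAt π y γ) : Extendable G π s(x, y) := by
  classical
  refine ⟨_, hπ.update (G.mem_edgeSet.2 hxy) hx hy, fun e => ?_⟩
  by_cases h : e = s(x, y) <;> simp [h]

end Coloring

section Fan

variable {x y : V}

/-- Vizing fans at `x` starting with `y`, stored in reverse: the head of the list is the last
vertex of the fan. -/
inductive IsFan (G : SimpleGraph V) (x y : V) (π : Sym2 V → Option (Fin D)) : List V → Prop
  | base : G.Adj x y → IsFan G x y π [y]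
  | cons {z w : V} {l : List V} {c : Fin D} : IsFan G x y π (z :: l) → G.Adj x w →
      π s(x, w) = some c → freeAt π z c → IsFan G x y π (w :: z :: l)

theorem IsFan.adj {m : List V} (hf : IsFan G x y π m) : ∀ v ∈ m, G.Adj x v := by
  induction hf with
  | base h => simpa using h
  | cons _ ha _ _ ih => simpa [ha] using ih

theorem IsFan.suffix {m l : List V} (hf : IsFan G x y π m) (hs : l <:+ m) (hl : l ≠ []) :
    IsFan G x y π l := by
  induction hf with
  | base h =>
    rcases List.suffix_cons_iff.1 hs with rfl | hs
    · exact .base h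
    · exact absurd (List.suffix_nil.1 hs) hl
  | cons hf ha hc hfree ih =>
    rcases List.suffix_cons_iff.1 hs with rfl | hs
    · exact .cons hf ha hc hfree
    · exact ih hs

theorem IsFan.head_notMem {z w : V} {l : List V} (hf : IsFan G x y π (w :: l))
    (hz : z ∉ w :: l) : w ∉ s(x, z) := by
  rw [Sym2.mem_iff]
  rintro (rfl | rfl)
  · exact G.irrefl (hf.adj _ List.mem_cons_self)
  · exact hz List.mem_cons_self

theorem IsFan.update [DecidableEq V] {m : List V} {z : V} {γ : Fin D} (hf : IsFan G x y π m)
    (hz : z ∉ m) : IsFan G x y (Function.update π s(x, z) (some γ)) m := by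
  induction hf with
  | base h => exact .base h
  | @cons z' w l c hf ha hc hfree ih =>
    have hzl : z ∉ z' :: l := fun h => hz (List.mem_cons_of_mem _ h)
    refine .cons (ih hzl) ha ?_ ((freeAt_update_of_notMem (hf.head_notMem hzl)).2 hfree)
    rw [Function.update_of_ne fun h => hz (by simp [Sym2.congr_right.1 h])]
    exact hc

/-- Recoloring `x z` with `γ` frees its old color at `x`, and that color is free at the next
vertex of the fan. -/
theorem IsFan.extendable (hπ : IsProperPEC G D π) {z : V} {l : List V}
    (hf : IsFan G x y π (z :: l)) (hnd : (z :: l).Nodup) {γ : Fin D} (hz : freeAt π z γ)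
    (hx : freeAt π x γ) : Extendable G π s(x, y) := by
  classical
  induction l generalizing z π γ with
  | nil =>
    cases hf with
    | base hxy => exact extendable_of_freeAt hπ hxy hx hz
  | cons z' l ih =>
    cases hf with
    | cons hf ha hc hfree =>
      have hzl : z ∉ z' :: l := (List.nodup_cons.1 hnd).1
      rw [← extendable_congr (π' := Function.update π s(x, z) (some γ)) fun e => by
        by_cases h : e = s(x, z) <;> simp [h, hc]]
      exact ih (hπ.update (G.mem_edgeSet.2 ha) hx hz) (hf.update hzl) (List.nodup_cons.1 hnd).2
        ((freeAt_update_of_notMem (hf.head_notMem hzl)).2 hfree) (freeAt_update_of_eq_some hπ hc hx)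

end Fan

section Kempe

variable {a b : Fin D}

theorem chainGraph_adj {u v : V} :
    (chainGraph π a b).Adj u v ↔ (π s(u, v) = some a ∨ π s(u, v) = some b) ∧ u ≠ v := by
  simp [chainGraph]

theorem chainGraph_comm : chainGraph π a b = chainGraph π b a := by
  simp only [chainGraph, or_comm]

theorem IsProperPEC.chainGraph_adj_eq_or_eq (hπ : IsProperPEC G D π) {s t₁ t₂ t : V}
    (h₁ : (chainGraph π a b).Adj s t₁) (h₂ : (chainGraph π a b).Adj s t₂)
    (h : (chainGraph π a b).Adj s t) (hne : t₁ ≠ t₂) : t = t₁ ∨ t = t₂ := by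
  have unique : ∀ {t t' : V} {c : Fin D}, π s(s, t) = some c → π s(s, t') = some c → t = t' :=
    fun h h' => Sym2.congr_right.1 (hπ.eq_of_mem_of_mem (Sym2.mem_mk_left _ _)
      (Sym2.mem_mk_left _ _) h h')
  rcases (chainGraph_adj.1 h₁).1 with h₁ | h₁ <;> rcases (chainGraph_adj.1 h₂).1 with h₂ | h₂ <;>
    rcases (chainGraph_adj.1 h).1 with h | h
  all_goals first
    | exact absurd (unique h₁ h₂) hne
    | exact .inl (unique h h₁)
    | exact .inr (unique h h₂)

theorem IsProperPEC.chainEndpoint_of_freeAt (hπ : IsProperPEC G D π) {v : V}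
    (hv : freeAt π v a) : chainEndpoint π a b v := by
  have colored_b : ∀ {t}, (chainGraph π a b).Adj v t → π s(v, t) = some b := fun ht =>
    (chainGraph_adj.1 ht).1.resolve_left (hv _ (Sym2.mem_mk_left _ _))
  intro t₁ ht₁ t₂ ht₂
  exact Sym2.congr_right.1 (hπ.eq_of_mem_of_mem (Sym2.mem_mk_left _ _) (Sym2.mem_mk_left _ _)
    (colored_b ht₁) (colored_b ht₂))

/-- All three vertices would be endpoints of a single path of the chain. -/
theorem IsProperPEC.not_chainReach_and_chainReach (hπ : IsProperPEC G D π) {x z z' : V}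
    (hx : freeAt π x a) (hz : freeAt π z b) (hz' : freeAt π z' b) (hxz : x ≠ z) (hxz' : x ≠ z')
    (hzz' : z ≠ z') : ¬ (chainReach π a b x z ∧ chainReach π a b x z') := by
  have endpoint_b : ∀ {v}, freeAt π v b → chainEndpoint π a b v := fun hv => by
    rw [chainEndpoint, chainGraph_comm]
    exact hπ.chainEndpoint_of_freeAt hv
  exact SimpleGraph.not_reachable_and_reachable_of_subsingleton_neighborSet
    (fun _ _ _ _ => hπ.chainGraph_adj_eq_or_eq) hxz hxz'.symm hzz'.symm
    (hπ.chainEndpoint_of_freeAt hx) (endpoint_b hz) (endpoint_b hz')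

open scoped Classical in
noncomputable def kempeSwap (π : Sym2 V → Option (Fin D)) (a b : Fin D) (w : V) :
    Sym2 V → Option (Fin D) :=
  fun e => if ∃ t ∈ e, chainReach π a b w t then (π e).map (Equiv.swap a b) else π e

variable {w : V}

theorem kempeSwap_of_chainReach {e : Sym2 V} {t : V} (ht : t ∈ e) (hr : chainReach π a b w t) :
    kempeSwap π a b w e = (π e).map (Equiv.swap a b) :=
  if_pos ⟨t, ht, hr⟩

theorem kempeSwap_of_not_chainReach {e : Sym2 V} {v : V} (hv : v ∈ e)
    (hr : ¬ chainReach π a b w v) : kempeSwap π a b w e = π e := by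
  unfold kempeSwap
  split_ifs with h
  swap
  · rfl
  obtain ⟨t, ht, hrt⟩ := h
  have htv : t ≠ v := by rintro rfl; exact hr hrt
  rcases hπe : π e with _ | c
  · rfl
  by_cases hc : c = a ∨ c = b
  · refine absurd (hrt.trans (chainGraph_adj.2 ⟨?_, htv⟩).reachable) hr
    rw [← (Sym2.mem_and_mem_iff htv).1 ⟨ht, hv⟩, hπe]
    rcases hc with rfl | rfl <;> simp
  · rw [not_or] at hc
    simp [Equiv.swap_apply_of_ne_of_ne hc.1 hc.2]

theorem kempeSwap_eq_none_iff {e : Sym2 V} : kempeSwap π a b w e = none ↔ π e = none := by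
  unfold kempeSwap
  split_ifs <;> simp

theorem IsProperPEC.kempeSwap (hπ : IsProperPEC G D π) :
    IsProperPEC G D (kempeSwap π a b w) := by
  refine ⟨fun e h => hπ.1 e (mt kempeSwap_eq_none_iff.2 h),
    fun e₁ e₂ hne ⟨t, ht₁, ht₂⟩ h₁ => ?_⟩
  have h₁' : π e₁ ≠ none := mt kempeSwap_eq_none_iff.2 h₁
  by_cases hr : chainReach π a b w t
  · rw [kempeSwap_of_chainReach ht₁ hr, kempeSwap_of_chainReach ht₂ hr]
    exact fun h => hπ.2 e₁ e₂ hne ⟨t, ht₁, ht₂⟩ h₁' (Option.map_injective (Equiv.injective _) h)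
  · rw [kempeSwap_of_not_chainReach ht₁ hr, kempeSwap_of_not_chainReach ht₂ hr]
    exact hπ.2 e₁ e₂ hne ⟨t, ht₁, ht₂⟩ h₁'

theorem freeAt_kempeSwap_of_chainReach {v : V} {c : Fin D} (hr : chainReach π a b w v) :
    freeAt (kempeSwap π a b w) v c ↔ freeAt π v (Equiv.swap a b c) := by
  refine forall_congr' fun e => imp_congr_right fun he => ?_
  rw [kempeSwap_of_chainReach he hr, Ne, Ne, Option.map_eq_some_iff]
  simp [Equiv.swap_apply_eq_iff]

theorem freeAt_kempeSwap_of_not_chainReach {v : V} {c : Fin D} (hr : ¬ chainReach π a b w v) :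
    freeAt (kempeSwap π a b w) v c ↔ freeAt π v c := by
  refine forall_congr' fun e => imp_congr_right fun he => ?_
  rw [kempeSwap_of_not_chainReach he hr]

theorem extendable_kempeSwap_iff {e₀ : Sym2 V} :
    Extendable G (kempeSwap π a b w) e₀ ↔ Extendable G π e₀ :=
  extendable_congr fun _ => kempeSwap_eq_none_iff

end Kempe

section FanKempe

variable {x y w : V} {a b : Fin D}

/-- The only fan step that a Kempe change away from `x` can break is one whose color `b` is free
at a vertex of the chain; the part of the fan up to that vertex survives. -/
theorem IsFan.kempeSwap_or (ha : freeAt π x a)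
    (hx : ¬ chainReach π a b w x) {m : List V} (hf : IsFan G x y π m) :
    IsFan G x y (kempeSwap π a b w) m ∨ ∃ v l, v :: l <:+ m ∧
      IsFan G x y (kempeSwap π a b w) (v :: l) ∧ chainReach π a b w v ∧ freeAt π v b := by
  induction hf with
  | base h => exact .inl (.base h)
  | @cons z w' l c hf hxw hc hfree ih =>
    rcases ih with hf' | ⟨v, l', hs, hf', hr, hb⟩
    · by_cases hbad : chainReach π a b w z ∧ c = b
      · exact .inr ⟨z, l, List.suffix_cons _ _, hf', hbad.1, hbad.2 ▸ hfree⟩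
      refine .inl (.cons (c := c) hf' hxw ?_ ?_)
      · rwa [kempeSwap_of_not_chainReach (Sym2.mem_mk_left _ _) hx]
      by_cases hr : chainReach π a b w z
      · have hca : c ≠ a := by rintro rfl; exact ha _ (Sym2.mem_mk_left _ _) hc
        rw [freeAt_kempeSwap_of_chainReach hr,
          Equiv.swap_apply_of_ne_of_ne hca fun hcb => hbad ⟨hr, hcb⟩]
        exact hfree
      · exact (freeAt_kempeSwap_of_not_chainReach hr).2 hfree
    · exact .inr ⟨v, l', hs.trans (List.suffix_cons _ _), hf', hr, hb⟩

/-- Swapping the chain through `w` makes `a` free at `x` and at the last vertex of what survives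
of the fan, which can then be rotated. -/
theorem IsFan.extendable_of_not_chainReach (hπ : IsProperPEC G D π) (ha : freeAt π x a)
    {l : List V} (hf : IsFan G x y π (w :: l)) (hnd : (w :: l).Nodup) (hw : freeAt π w b)
    (hx : ¬ chainReach π a b w x) : Extendable G π s(x, y) := by
  rw [← extendable_kempeSwap_iff (a := a) (b := b) (w := w)]
  obtain ⟨v, l', hs, hf', hr, hb⟩ : ∃ v l', v :: l' <:+ w :: l ∧
      IsFan G x y (kempeSwap π a b w) (v :: l') ∧ chainReach π a b w v ∧ freeAt π v b := by
    rcases hf.kempeSwap_or ha hx with hf' | h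
    · exact ⟨w, l, List.suffix_refl _, hf', SimpleGraph.Reachable.refl _, hw⟩
    · exact h
  refine hf'.extendable hπ.kempeSwap (hs.sublist.nodup hnd) (γ := a) ?_
    ((freeAt_kempeSwap_of_not_chainReach hx).2 ha)
  rwa [freeAt_kempeSwap_of_chainReach hr, Equiv.swap_apply_left]

theorem IsFan.extendable_of_freeAt_freeAt (hπ : IsProperPEC G D π) (ha : freeAt π x a)
    {z z' : V} {l l' : List V} (hf : IsFan G x y π (z :: l)) (hnd : (z :: l).Nodup)
    (hf' : IsFan G x y π (z' :: l')) (hnd' : (z' :: l').Nodup) (hzz' : z ≠ z')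
    (hz : freeAt π z b) (hz' : freeAt π z' b) : Extendable G π s(x, y) := by
  have hxz := (hf.adj z List.mem_cons_self).ne
  have hxz' := (hf'.adj z' List.mem_cons_self).ne
  by_cases hr : chainReach π a b x z
  · have hr' : ¬ chainReach π a b x z' := fun hr' =>
      hπ.not_chainReach_and_chainReach ha hz hz' hxz hxz' hzz' ⟨hr, hr'⟩
    exact hf'.extendable_of_not_chainReach hπ ha hnd' hz' fun h => hr' h.symm
  · exact hf.extendable_of_not_chainReach hπ ha hnd hz fun h => hr h.symm

end FanKempe

section Counting

open scoped Classical in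
noncomputable def freeColors (π : Sym2 V → Option (Fin D)) (v : V) : Finset (Fin D) :=
  {c | freeAt π v c}

theorem mem_freeColors {v : V} {c : Fin D} : c ∈ freeColors π v ↔ freeAt π v c := by
  simp [freeColors]

variable [Fintype V] {x y : V}

open scoped Classical in
noncomputable def fanVertices (G : SimpleGraph V) (π : Sym2 V → Option (Fin D)) (x y : V) :
    Finset V :=
  {v | ∃ l, IsFan G x y π (v :: l) ∧ (v :: l).Nodup}

theorem mem_fanVertices {v : V} :
    v ∈ fanVertices G π x y ↔ ∃ l, IsFan G x y π (v :: l) ∧ (v :: l).Nodup := by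
  simp [fanVertices]

theorem self_mem_fanVertices (hxy : G.Adj x y) : y ∈ fanVertices G π x y :=
  mem_fanVertices.2 ⟨[], .base hxy, List.nodup_singleton y⟩

theorem adj_of_mem_fanVertices {v : V} (hv : v ∈ fanVertices G π x y) : G.Adj x v := by
  obtain ⟨l, hf, -⟩ := mem_fanVertices.1 hv
  exact hf.adj v List.mem_cons_self

theorem mem_fanVertices_of_freeAt (hπ : IsProperPEC G D π) {v w : V} {c : Fin D}
    (hv : v ∈ fanVertices G π x y) (hc : freeAt π v c) (hw : π s(x, w) = some c) :
    w ∈ fanVertices G π x y := by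
  obtain ⟨l, hf, hnd⟩ := mem_fanVertices.1 hv
  by_cases hm : w ∈ v :: l
  · obtain ⟨l₁, l₂, h⟩ := List.append_of_mem hm
    have hs : w :: l₂ <:+ v :: l := ⟨l₁, h.symm⟩
    exact mem_fanVertices.2 ⟨l₂, hf.suffix hs (List.cons_ne_nil _ _), hs.sublist.nodup hnd⟩
  · exact mem_fanVertices.2 ⟨v :: l, .cons hf (hπ.adj hw) hw hc, List.nodup_cons.2 ⟨hm, hnd⟩⟩

variable [DecidableEq V] [DecidableRel G.Adj]

theorem le_card_freeColors_add_card_colored (hπ : IsProperPEC G D π) (v : V) :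
    D ≤ #(freeColors π v) + #{e ∈ G.incidenceFinset v | π e ≠ none} := by
  have hsurj : Set.SurjOn π ({e ∈ G.incidenceFinset v | π e ≠ none} : Finset (Sym2 V))
      ((univ \ freeColors π v).map .some) := by
    intro o ho
    obtain ⟨c, hc, rfl⟩ := by simpa [mem_freeColors] using ho
    obtain ⟨w, hw⟩ := not_freeAt_iff.1 hc
    exact ⟨s(v, w), by simp [hw, hπ.adj hw], hw⟩
  have hcard := card_le_card_of_surjOn π hsurj
  rw [card_map, card_univ_sdiff, Fintype.card_fin] at hcard
  have := card_le_univ (freeColors π v)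
  rw [Fintype.card_fin] at this
  omega

theorem le_card_freeColors_add_degree (hπ : IsProperPEC G D π) (v : V) :
    D ≤ #(freeColors π v) + G.degree v := by
  have := le_card_freeColors_add_card_colored hπ v
  have := card_le_card (filter_subset (π · ≠ none) (G.incidenceFinset v))
  rw [card_incidenceFinset_eq_degree] at this
  omega

theorem lt_card_freeColors_add_degree (hπ : IsProperPEC G D π) {v : V} {e₀ : Sym2 V}
    (he₀ : e₀ ∈ G.edgeSet) (hv : v ∈ e₀) (hun : π e₀ = none) :
    D < #(freeColors π v) + G.degree v := by
  have hmem : e₀ ∈ G.incidenceFinset v := (G.mem_incidenceFinset v e₀).2 ⟨he₀, hv⟩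
  have hsub : {e ∈ G.incidenceFinset v | π e ≠ none} ⊆ (G.incidenceFinset v).erase e₀ :=
    fun e he => by
      rw [mem_filter] at he
      exact mem_erase.2 ⟨by rintro rfl; exact he.2 hun, he.1⟩
  have := le_card_freeColors_add_card_colored hπ v
  have := card_le_card hsub
  have := card_pos.2 ⟨_, hmem⟩
  rw [card_erase_of_mem hmem, card_incidenceFinset_eq_degree] at *
  omega

variable (hπ : IsProperPEC G D π) (hxy : G.Adj x y) (hun : π s(x, y) = none)
  (hext : ¬ Extendable G π s(x, y))
include hπ hxy hun hext

/-- Free colors at distinct fan vertices are distinct and each is used at `x` towards a fan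
vertex other than `y`. -/
theorem sum_card_freeColors_le (hdx : G.degree x ≤ D) :
    ∑ v ∈ fanVertices G π x y, #(freeColors π v) ≤ #((fanVertices G π x y).erase y) := by
  set Z := fanVertices G π x y
  obtain ⟨a, ha⟩ : ∃ a, freeAt π x a := by
    have := lt_card_freeColors_add_degree hπ (G.mem_edgeSet.2 hxy) (Sym2.mem_mk_left x y) hun
    obtain ⟨a, ha⟩ := card_pos.1 (by omega : 0 < #(freeColors π x))
    exact ⟨a, mem_freeColors.1 ha⟩
  have hdisj : (Z : Set V).PairwiseDisjoint (freeColors π) := by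
    intro v hv v' hv' hne
    rw [Function.onFun, Finset.disjoint_left]
    intro c hc hc'
    obtain ⟨l, hf, hnd⟩ := mem_fanVertices.1 hv
    obtain ⟨l', hf', hnd'⟩ := mem_fanVertices.1 hv'
    exact hext (hf.extendable_of_freeAt_freeAt hπ ha hnd hf' hnd' hne (mem_freeColors.1 hc)
      (mem_freeColors.1 hc'))
  have hsurj : Set.SurjOn (fun w => π s(x, w)) (Z.erase y)
      ((Z.biUnion (freeColors π)).map .some) := by
    intro o ho
    obtain ⟨c, ⟨v, hv, hc⟩, rfl⟩ := by simpa using ho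
    obtain ⟨l, hf, hnd⟩ := mem_fanVertices.1 hv
    have hcx : ¬ freeAt π x c := fun hcx => hext (hf.extendable hπ hnd (mem_freeColors.1 hc) hcx)
    obtain ⟨w, hw⟩ := not_freeAt_iff.1 hcx
    refine ⟨w, mem_erase.2 ⟨?_, mem_fanVertices_of_freeAt hπ hv (mem_freeColors.1 hc) hw⟩, hw⟩
    rintro rfl
    simp [hun] at hw
  have := card_le_card_of_surjOn _ hsurj
  rwa [card_map, card_biUnion hdisj] at this

theorem sub_degree_lt_card_fanVertices_degree_eq (hΔ : ∀ v, G.degree v ≤ D) :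
    D - G.degree y < #{v ∈ (fanVertices G π x y).erase y | G.degree v = D} := by
  have hsum := sum_card_freeColors_le hπ hxy hun hext (hΔ x)
  rw [← add_sum_erase _ _ (self_mem_fanVertices hxy)] at hsum
  have hy := lt_card_freeColors_add_degree hπ (G.mem_edgeSet.2 hxy) (Sym2.mem_mk_right x y) hun
  have hlow : #{v ∈ (fanVertices G π x y).erase y | ¬ G.degree v = D} ≤
      ∑ v ∈ (fanVertices G π x y).erase y, #(freeColors π v) := by
    rw [card_filter]
    refine sum_le_sum fun v _ => ?_
    have := le_card_freeColors_add_degree hπ v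
    have := hΔ v
    split_ifs <;> omega
  have := card_filter_add_card_filter_not (s := (fanVertices G π x y).erase y) (G.degree · = D)
  have := hΔ y
  omega

end Counting

theorem stmt2_general {V : Type} [Fintype V] (D : ℕ)
    (G : SimpleGraph V) [DecidableRel G.Adj] (hΔ : G.maxDegree ≤ D)
    (x y : V) (hxy : G.Adj x y)
    (hweak : ((G.neighborFinset x).filter (fun w => G.degree w = D)).card ≤
      D - G.degree y + (if G.degree y = D then 1 else 0))
    (π : Sym2 V → Option (Fin D)) (hπ : IsProperPEC G D π) (huncol : π s(x, y) = none) :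
    ∃ σ : Sym2 V → Option (Fin D), IsProperPEC G D σ ∧
      ∀ e : Sym2 V, (σ e ≠ none ↔ (π e ≠ none ∨ e = s(x, y))) := by
  classical
  by_contra hext
  have hcount := sub_degree_lt_card_fanVertices_degree_eq hπ hxy huncol hext
    fun v => (G.degree_le_maxDegree v).trans hΔ
  have hsub : {v ∈ (fanVertices G π x y).erase y | G.degree v = D} ⊆
      ((G.neighborFinset x).filter (fun w => G.degree w = D)).erase y := fun v hv => by
    simp only [mem_filter, mem_erase] at hv ⊢
    exact ⟨hv.1.1, (G.mem_neighborFinset x v).2 (adj_of_mem_fanVertices hv.1.2), hv.2⟩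
  have hle := card_le_card hsub
  rw [card_erase_eq_ite] at hle
  by_cases hyD : G.degree y = D <;> simp [hyD, hxy] at hweak hle <;> omega

/-- Vizing Adjacency Lemma. -/
theorem stmt2 {V : Type} [Fintype V] [DecidableEq V] (D : ℕ) (hD : 0 < D)
    (G : SimpleGraph V) [DecidableRel G.Adj] (hΔ : G.maxDegree ≤ D)
    (x y : V) (hxy : G.Adj x y)
    (hweak : ((G.neighborFinset x).filter (fun w => G.degree w = D)).card ≤
      D - G.degree y + (if G.degree y = D then 1 else 0))
    (π : Sym2 V → Option (Fin D)) (hπ : IsProperPEC G D π) (huncol : π s(x, y) = none) :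
    ∃ σ : Sym2 V → Option (Fin D), IsProperPEC G D σ ∧
      ∀ e : Sym2 V, (σ e ≠ none ↔ (π e ≠ none ∨ e = s(x, y))) :=
  stmt2_general D G hΔ x y hxy hweak π hπ huncol
end

section
/- Let G be a simple graph with partial D-edge-coloring π, and let e = xy be an uncolored edge with colors a ∈ π̄(x) and b ∈ π̄(y) such that x is not an endpoint of the (a,b)-chain P containing y. Then the map σ obtained from π by interchanging the colors a and b on all edges of P and coloring e with a is a proper partial D-edge-coloring of G whose colored set is π's colored set together with e. -/
open SimpleGraph

open scoped Classical in
/-- Interchanging the colors `a` and `b` on the `(a,b)`-chain containing `y` and coloring the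
edge `xy` with `a` yields a proper partial coloring additionally coloring `xy`. -/
theorem stmt12 {V : Type} [DecidableEq V] (G : SimpleGraph V) (D : ℕ)
    (π : Sym2 V → Option (Fin D)) (hπ : IsProperPEC G D π)
    (x y : V) (a b : Fin D) (hab : a ≠ b) (hxy : G.Adj x y) (huncol : π s(x, y) = none)
    (hxa : freeAt π x a) (hyb : freeAt π y b)
    (hnotend : ¬ (chainReach π a b x y ∧ chainEndpoint π a b x)) :
    let σ : Sym2 V → Option (Fin D) := fun e =>
      if e = s(x, y) then some a
      else if π e = some a ∧ ∃ u ∈ e, chainReach π a b u y then some b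
      else if π e = some b ∧ ∃ u ∈ e, chainReach π a b u y then some a
      else π e
    IsProperPEC G D σ ∧ ∀ e, (σ e ≠ none ↔ (π e ≠ none ∨ e = s(x, y))) := by
  intro σ
  have hchainadj : ∀ u w : V, u ≠ w → (π s(u,w) = some a ∨ π s(u,w) = some b) →
      (chainGraph π a b).Adj u w := by
    intro u w hne hc
    rw [chainGraph, fromEdgeSet_adj]
    exact ⟨hc, hne⟩
  have hreach : ∀ (e : Sym2 V) (v : V), v ∈ e → (π e = some a ∨ π e = some b) →
      (∃ u ∈ e, chainReach π a b u y) → chainReach π a b v y := by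
    intro e
    induction e using Sym2.ind with
    | _ p q =>
      intro v hv hc hu
      obtain ⟨u, hu, hru⟩ := hu
      rw [Sym2.mem_iff] at hv hu
      by_cases hvu : v = u
      · subst hvu; exact hru
      · have hpq : s(v,u) = s(p,q) := by
          rcases hv with rfl | rfl <;> rcases hu with rfl | rfl <;>
            first | (exact absurd rfl hvu) | rfl | exact Sym2.eq_swap
        have hadj : (chainGraph π a b).Adj v u := hchainadj v u hvu (by rwa [hpq])
        exact hadj.reachable.trans hru
  have hxend : chainEndpoint π a b x := by
    intro w₁ hw₁ w₂ hw₂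
    rw [mem_neighborSet, chainGraph, fromEdgeSet_adj] at hw₁ hw₂
    have hb₁ : π s(x, w₁) = some b := by
      rcases hw₁.1 with h | h
      · exact absurd h (hxa _ (by simp))
      · exact h
    have hb₂ : π s(x, w₂) = some b := by
      rcases hw₂.1 with h | h
      · exact absurd h (hxa _ (by simp))
      · exact h
    by_contra hne
    have hedg : s(x, w₁) ≠ s(x, w₂) := by
      intro h; exact hne (Sym2.congr_right.mp h)
    exact hπ.2 _ _ hedg ⟨x, by simp, by simp⟩ (by simp [hb₁]) (by rw [hb₁, hb₂])
  have hσxy : σ s(x, y) = some a := by simp only [σ, if_pos rfl]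
  have key : ∀ e : Sym2 V, e ≠ s(x, y) →
      ((∃ u ∈ e, chainReach π a b u y) ∧ π e = some a ∧ σ e = some b) ∨
      ((∃ u ∈ e, chainReach π a b u y) ∧ π e = some b ∧ σ e = some a) ∨
      ((¬((π e = some a ∨ π e = some b) ∧ ∃ u ∈ e, chainReach π a b u y)) ∧ σ e = π e) := by
    intro e he
    by_cases hA : π e = some a ∧ ∃ u ∈ e, chainReach π a b u y
    · have hs : σ e = some b := by simp only [σ, if_neg he, if_pos hA]
      exact Or.inl ⟨hA.2, hA.1, hs⟩
    · by_cases hB : π e = some b ∧ ∃ u ∈ e, chainReach π a b u y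
      · have hs : σ e = some a := by simp only [σ, if_neg he, if_neg hA, if_pos hB]
        exact Or.inr (Or.inl ⟨hB.2, hB.1, hs⟩)
      · refine Or.inr (Or.inr ⟨?_, by simp only [σ, if_neg he, if_neg hA, if_neg hB]⟩)
        rintro ⟨hc | hc, hu⟩
        · exact hA ⟨hc, hu⟩
        · exact hB ⟨hc, hu⟩
  refine ⟨⟨?_, ?_⟩, ?_⟩
  · intro e he
    by_cases h1 : e = s(x, y)
    · rw [h1, mem_edgeSet]; exact hxy
    · rcases key e h1 with ⟨_, hp, _⟩ | ⟨_, hp, _⟩ | ⟨_, hs⟩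
      · exact hπ.1 e (by simp [hp])
      · exact hπ.1 e (by simp [hp])
      · exact hπ.1 e (by rw [hs] at he; exact he)
  · intro e₁ e₂ hne hshare h1 heq
    obtain ⟨v, hv1, hv2⟩ := hshare
    by_cases h₁ : e₁ = s(x, y)
    · by_cases h₂ : e₂ = s(x, y)
      · exact hne (h₁.trans h₂.symm)
      · subst h₁
        rw [hσxy] at heq
        rcases key e₂ h₂ with ⟨r2, hp2, hs2⟩ | ⟨r2, hp2, hs2⟩ | ⟨hn2, hs2⟩
        · rw [hs2] at heq; exact hab (by simpa using heq)
        · rw [Sym2.mem_iff] at hv1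
          rcases hv1 with rfl | rfl
          · exact hnotend ⟨hreach e₂ v hv2 (Or.inr hp2) r2, hxend⟩
          · exact hyb e₂ hv2 hp2
        · rw [hs2] at heq
          rw [Sym2.mem_iff] at hv1
          rcases hv1 with rfl | rfl
          · exact hxa e₂ hv2 heq.symm
          · exact hn2 ⟨Or.inl heq.symm, v, hv2, Reachable.refl v⟩
    · by_cases h₂ : e₂ = s(x, y)
      · subst h₂
        rw [hσxy] at heq
        rcases key e₁ h₁ with ⟨r1, hp1, hs1⟩ | ⟨r1, hp1, hs1⟩ | ⟨hn1, hs1⟩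
        · rw [hs1] at heq; exact hab (Option.some.inj heq).symm
        · rw [Sym2.mem_iff] at hv2
          rcases hv2 with rfl | rfl
          · exact hnotend ⟨hreach e₁ v hv1 (Or.inr hp1) r1, hxend⟩
          · exact hyb e₁ hv1 hp1
        · rw [hs1] at heq
          rw [Sym2.mem_iff] at hv2
          rcases hv2 with rfl | rfl
          · exact hxa e₁ hv1 heq
          · exact hn1 ⟨Or.inl heq, v, hv1, Reachable.refl v⟩
      · rcases key e₁ h₁ with ⟨r1, hp1, hs1⟩ | ⟨r1, hp1, hs1⟩ | ⟨hn1, hs1⟩ <;>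
          rcases key e₂ h₂ with ⟨r2, hp2, hs2⟩ | ⟨r2, hp2, hs2⟩ | ⟨hn2, hs2⟩
        · exact hπ.2 e₁ e₂ hne ⟨v, hv1, hv2⟩ (by simp [hp1]) (by rw [hp1, hp2])
        · rw [hs1, hs2] at heq; exact hab (Option.some.inj heq).symm
        · rw [hs1, hs2] at heq
          exact hn2 ⟨Or.inr heq.symm, v, hv2, hreach e₁ v hv1 (Or.inl hp1) r1⟩
        · rw [hs1, hs2] at heq; exact hab (by simpa using heq)
        · exact hπ.2 e₁ e₂ hne ⟨v, hv1, hv2⟩ (by simp [hp1]) (by rw [hp1, hp2])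
        · rw [hs1, hs2] at heq
          exact hn2 ⟨Or.inl heq.symm, v, hv2, hreach e₁ v hv1 (Or.inr hp1) r1⟩
        · rw [hs1, hs2] at heq
          exact hn1 ⟨Or.inr heq, v, hv1, hreach e₂ v hv2 (Or.inl hp2) r2⟩
        · rw [hs1, hs2] at heq
          exact hn1 ⟨Or.inl heq, v, hv1, hreach e₂ v hv2 (Or.inr hp2) r2⟩
        · rw [hs1, hs2] at heq
          rw [hs1] at h1
          exact hπ.2 e₁ e₂ hne ⟨v, hv1, hv2⟩ h1 heq
  · intro e
    by_cases h1 : e = s(x, y)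
    · rw [h1, hσxy]; simp
    · rcases key e h1 with ⟨_, hp, hs⟩ | ⟨_, hp, hs⟩ | ⟨_, hs⟩
      · rw [hs]; simp [hp, h1]
      · rw [hs]; simp [hp, h1]
      · rw [hs]; simp [h1]
end
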